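/- For real numbers a, b and p ≥ 2, the inequality (|a|^{p-2}a − |b|^{p-2}b)(a − b) ≥ 2^{2-p}|a − b|^p holds. -/
import Mathlib

open Real

private lemma rpow_two_pow_ineq {x y r : ℝ} (hx : 0 ≤ x) (hy : 0 ≤ y) (hr : 1 ≤ r) :
    (x + y) ^ r ≤ 2 ^ (r - 1) * (x ^ r + y ^ r) := by
  lift x to NNReal using hx
  lift y to NNReal using hy
  have := NNReal.rpow_add_le_mul_rpow_add_rpow x y hr
  exact_mod_cast this

private lemma rpow_superadd {x y r : ℝ} (hx : 0 ≤ x) (hy : 0 ≤ y) (hr : 1 ≤ r) :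
    x ^ r + y ^ r ≤ (x + y) ^ r := by
  lift x to NNReal using hx
  lift y to NNReal using hy
  have := NNReal.add_rpow_le_rpow_add x y hr
  exact_mod_cast this

private lemma aux_case (p : ℝ) (hp : 2 ≤ p) (a b : ℝ) (hab : |b| ≤ a) :
    (2 : ℝ) ^ (2 - p) * |a - b| ^ p ≤
      (|a| ^ (p - 2) * a - |b| ^ (p - 2) * b) * (a - b) := by
  have ha : 0 ≤ a := le_trans (abs_nonneg b) hab
  have hba : b ≤ a := le_trans (le_abs_self b) hab
  have hd : 0 ≤ a - b := sub_nonneg.2 hba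
  have habs : |a - b| = a - b := abs_of_nonneg hd
  have haa : |a| = a := abs_of_nonneg ha
  rw [habs, haa]
  have hsplit : (a - b) ^ p = (a - b) ^ (p - 1) * (a - b) := by
    have h := Real.rpow_add' (y := p - 1) (z := 1) hd (by intro hc; linarith [hc])
    rw [sub_add_cancel, Real.rpow_one] at h
    exact h
  have hap : a ^ (p - 2) * a = a ^ (p - 1) := by
    nth_rewrite 2 [← Real.rpow_one a]
    rw [← Real.rpow_add' ha (by linarith)]
    ring_nf
  rw [hsplit, hap]
  have key : (2 : ℝ) ^ (2 - p) * (a - b) ^ (p - 1) ≤ a ^ (p - 1) - |b| ^ (p - 2) * b := by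
    rcases le_total 0 b with hb | hb
    · rw [abs_of_nonneg hb]
      have hbp : b ^ (p - 2) * b = b ^ (p - 1) := by
        nth_rewrite 2 [← Real.rpow_one b]
        rw [← Real.rpow_add' hb (by linarith)]
        ring_nf
      rw [hbp]
      have h1 : (a - b) ^ (p - 1) + b ^ (p - 1) ≤ a ^ (p - 1) := by
        have := rpow_superadd hd hb (by linarith : (1:ℝ) ≤ p - 1)
        simpa using this
      have h2 : (2 : ℝ) ^ (2 - p) ≤ 1 :=
        Real.rpow_le_one_of_one_le_of_nonpos one_le_two (by linarith)
      have h3 : (0:ℝ) ≤ (a - b) ^ (p - 1) := Real.rpow_nonneg hd _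
      nlinarith
    · rw [abs_of_nonpos hb]
      have hnb : 0 ≤ -b := neg_nonneg.2 hb
      have hbp : (-b) ^ (p - 2) * b = -((-b) ^ (p - 1)) := by
        have : (-b) ^ (p - 2) * (-b) = (-b) ^ (p - 1) := by
          nth_rewrite 2 [← Real.rpow_one (-b)]
          rw [← Real.rpow_add' hnb (by linarith)]
          ring_nf
        linarith [this]
      rw [hbp, sub_neg_eq_add]
      have h1 : (a + -b) ^ (p - 1) ≤ 2 ^ (p - 1 - 1) * (a ^ (p - 1) + (-b) ^ (p - 1)) :=
        rpow_two_pow_ineq ha hnb (by linarith)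
      have h2 : (0:ℝ) < (2:ℝ) ^ (2 - p) := Real.rpow_pos_of_pos two_pos _
      have h3 : (2:ℝ) ^ (2 - p) * 2 ^ (p - 1 - 1) = 1 := by
        rw [← Real.rpow_add two_pos, show 2 - p + (p - 1 - 1) = 0 by ring, Real.rpow_zero]
      have h4 : a - b = a + -b := by ring
      rw [h4]
      calc (2:ℝ) ^ (2 - p) * (a + -b) ^ (p - 1)
          ≤ (2:ℝ) ^ (2 - p) * (2 ^ (p - 1 - 1) * (a ^ (p - 1) + (-b) ^ (p - 1))) :=
            mul_le_mul_of_nonneg_left h1 h2.le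
        _ = a ^ (p - 1) + (-b) ^ (p - 1) := by rw [← mul_assoc, h3, one_mul]
  calc (2 : ℝ) ^ (2 - p) * ((a - b) ^ (p - 1) * (a - b))
      = ((2:ℝ) ^ (2 - p) * (a - b) ^ (p - 1)) * (a - b) := by ring
    _ ≤ (a ^ (p - 1) - |b| ^ (p - 2) * b) * (a - b) := mul_le_mul_of_nonneg_right key hd

/-- Strong monotonicity inequality for the p-Laplacian, `p ≥ 2`:
`(|a|^{p-2} a - |b|^{p-2} b)(a - b) ≥ 2^{2-p} |a - b|^p`. -/
theorem signedPower_strong_monotonicity (p : ℝ) (hp : 2 ≤ p) (a b : ℝ) :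
    (2 : ℝ) ^ (2 - p) * |a - b| ^ p ≤
      (|a| ^ (p - 2) * a - |b| ^ (p - 2) * b) * (a - b) := by
  rcases le_or_gt (|b|) a with h | h
  · exact aux_case p hp a b h
  rcases le_or_gt (|a|) b with h2 | h2
  · have := aux_case p hp b a h2
    have e : |b - a| = |a - b| := abs_sub_comm b a
    calc (2 : ℝ) ^ (2 - p) * |a - b| ^ p
        = (2 : ℝ) ^ (2 - p) * |b - a| ^ p := by rw [e]
      _ ≤ (|b| ^ (p - 2) * b - |a| ^ (p - 2) * a) * (b - a) := this
      _ = (|a| ^ (p - 2) * a - |b| ^ (p - 2) * b) * (a - b) := by ring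
  rcases le_or_gt (|-b|) (-a) with h3 | h3
  · have := aux_case p hp (-a) (-b) h3
    have e : |-a - -b| = |a - b| := by rw [show -a - -b = -(a-b) by ring, abs_neg]
    rw [e, abs_neg, abs_neg] at this
    calc (2 : ℝ) ^ (2 - p) * |a - b| ^ p
        ≤ (|a| ^ (p - 2) * -a - |b| ^ (p - 2) * -b) * (-a - -b) := this
      _ = (|a| ^ (p - 2) * a - |b| ^ (p - 2) * b) * (a - b) := by ring
  rcases le_or_gt (|-a|) (-b) with h4 | h4
  · have := aux_case p hp (-b) (-a) h4
    have e : |-b - -a| = |a - b| := by rw [show -b - -a = -(b-a) by ring, abs_neg, abs_sub_comm]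
    rw [e, abs_neg, abs_neg] at this
    calc (2 : ℝ) ^ (2 - p) * |a - b| ^ p
        ≤ (|b| ^ (p - 2) * -b - |a| ^ (p - 2) * -a) * (-b - -a) := this
      _ = (|a| ^ (p - 2) * a - |b| ^ (p - 2) * b) * (a - b) := by ring
  -- impossible: all four fail
  exfalso
  rw [abs_neg] at h3 h4
  rcases abs_cases a with ⟨ea, _⟩ | ⟨ea, _⟩ <;> rcases abs_cases b with ⟨eb, _⟩ | ⟨eb, _⟩ <;>
    simp [ea, eb] at h h2 h3 h4 <;> linarith
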